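/- arXiv:1707.03459 — 6 statements merged into one kernel-verified Lean document; each statement's English description precedes it below -/
import Mathlib

section
/- For every nonnegative integer n, Σ_{i=0}^{n} (−1)^i · q^{binom(i,2)} · [n choose i]_q equals 1 if n = 0 and 0 otherwise. -/
/-- The Gaussian (q-)binomial coefficient as a polynomial in `q`,
defined by the Pascal-type recursion `[n+1, k+1]_q = [n, k]_q + q^(k+1) * [n, k+1]_q`. -/
noncomputable def gaussBinom : ℕ → ℕ → Polynomial ℤ
  | _, 0 => 1
  | 0, _ + 1 => 0
  | n + 1, k + 1 => gaussBinom n k + Polynomial.X ^ (k + 1) * gaussBinom n (k + 1)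

lemma gaussBinom_eq_zero : ∀ n k : ℕ, n < k → gaussBinom n k = 0 := by
  intro n
  induction n with
  | zero =>
    intro k hk
    match k, hk with
    | k + 1, _ => rfl
  | succ n ih =>
    intro k hk
    match k, hk with
    | m + 1, hk =>
      have h1 : n < m := Nat.lt_of_succ_lt_succ hk
      show gaussBinom n m + Polynomial.X ^ (m + 1) * gaussBinom n (m + 1) = 0
      rw [ih m h1, ih (m + 1) (h1.trans (Nat.lt_succ_self m)), mul_zero, add_zero]

/-- `Σ_{i=0}^{n} (−1)^i q^{binom(i,2)} [n choose i]_q` equals `1` if `n = 0` and `0` otherwise. -/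
theorem gaussBinom_alternating_sum (n : ℕ) :
    ∑ i ∈ Finset.range (n + 1),
        (-1 : Polynomial ℤ) ^ i * Polynomial.X ^ (i.choose 2) * gaussBinom n i =
      if n = 0 then 1 else 0 := by
  cases n with
  | zero => simp [gaussBinom]
  | succ n =>
    simp only [Nat.succ_ne_zero, if_false]
    rw [Finset.sum_range_succ']
    set g : ℕ → Polynomial ℤ :=
      fun j => (-1) ^ j * Polynomial.X ^ (j.choose 2 + j) * gaussBinom n j with hg
    have key : ∀ i,
        (-1 : Polynomial ℤ) ^ (i + 1) * Polynomial.X ^ ((i + 1).choose 2) *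
          gaussBinom (n + 1) (i + 1) = g (i + 1) - g i := by
      intro i
      have hrec : gaussBinom (n + 1) (i + 1)
          = gaussBinom n i + Polynomial.X ^ (i + 1) * gaussBinom n (i + 1) := rfl
      have h1 : (i + 1).choose 2 = i.choose 2 + i := by
        rw [Nat.choose_succ_succ]
        simp [Nat.choose_one_right, Nat.add_comm]
      simp only [hg, hrec, h1]
      ring
    calc (∑ i ∈ Finset.range (n + 1),
            (-1 : Polynomial ℤ) ^ (i + 1) * Polynomial.X ^ ((i + 1).choose 2) *
              gaussBinom (n + 1) (i + 1))
          + (-1 : Polynomial ℤ) ^ 0 * Polynomial.X ^ (Nat.choose 0 2) * gaussBinom (n + 1) 0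
        = (∑ i ∈ Finset.range (n + 1), (g (i + 1) - g i)) + 1 := by
          rw [Finset.sum_congr rfl fun i _ => key i]
          norm_num [gaussBinom]
      _ = (g (n + 1) - g 0) + 1 := by rw [Finset.sum_range_sub]
      _ = 0 := by
          simp [hg, gaussBinom_eq_zero n (n + 1) (Nat.lt_succ_self n), gaussBinom]
end

section
/- Let L be a modular lattice of finite height, equipped with a 2-coloring of its covering pairs (red/green) such that every interval of length 2 (diamond) is of one of four types: all covers red; all covers green; all lower covers red and all upper covers green; or exactly one lower cover green with the cover above it being the unique upper red cover. Then for any x ≤ y in L, the number of red coverings in a maximal chain from x to y is independent of the choice of maximal chain. -/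
/-- A red/green bi-coloring of the coverings of a lattice (`red a b` meaning the covering
`[a, b]` is colored red, `¬ red a b` meaning it is green) is *matroidal* if every interval
of height 2 (diamond) is of one of four types: all coverings red; all coverings green;
all lower coverings red and all upper coverings green; or exactly one lower covering green
with the covering above it being the unique red upper covering. -/
def IsMatroidalColoring {L : Type*} [Lattice L] (red : L → L → Prop) : Prop :=
  ∀ u w : L, (∃ v, u ⋖ v ∧ v ⋖ w) →
    ((∀ v, u ⋖ v → v ⋖ w → red u v ∧ red v w) ∨
     (∀ v, u ⋖ v → v ⋖ w → ¬ red u v ∧ ¬ red v w) ∨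
     (∀ v, u ⋖ v → v ⋖ w → red u v ∧ ¬ red v w) ∨
     (∃ v₀, u ⋖ v₀ ∧ v₀ ⋖ w ∧ ¬ red u v₀ ∧ red v₀ w ∧
        ∀ v, u ⋖ v → v ⋖ w → v ≠ v₀ → red u v ∧ ¬ red v w))

/-- A lattice has finite height if the lengths of its strict chains are bounded. -/
def FiniteHeight (L : Type*) [Lattice L] : Prop :=
  ∃ n : ℕ, ∀ c : List L, c.Chain' (· < ·) → c.length ≤ n + 1

/-!
The argument is the Jordan–Hölder exchange. Two maximal chains from `x` to `y` either share
their first step, and we pass to the tails, or start with distinct atoms `b ≠ b'` of `[x, y]`.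
Then `b ⊓ b' = x`, so by semimodularity `b ⊔ b'` covers both `b` and `b'`; completing `b ⊔ b'`
to `y` by any maximal chain splits the comparison into two comparisons of shorter chains and one
around the diamond `[x, b ⊔ b']`. The two ways around a diamond carry the same number of red
coverings (2, 0, 1, 1 for the four types). The lengths of the chains are compared along the way,
since the second comparison needs the length of the completed chain.
-/

section CovByChain

variable {L : Type*}

def IsCovByChain [LT L] {k : ℕ} (f : Fin (k + 1) → L) : Prop :=
  ∀ i : Fin k, f i.castSucc ⋖ f i.succ

noncomputable def redCount (red : L → L → Prop) {k : ℕ} (f : Fin (k + 1) → L) : ℕ :=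
  Nat.card {i : Fin k // red (f i.castSucc) (f i.succ)}

open Classical in
theorem redCount_succ (red : L → L → Prop) {k : ℕ} (f : Fin (k + 2) → L) :
    redCount red f = (if red (f 0) (f 1) then 1 else 0) + redCount red (Fin.tail f) := by
  simp only [redCount, Nat.card_eq_fintype_card, Fintype.card_subtype,
    Fin.card_filter_univ_succ']
  rfl

open Classical in
theorem redCount_cons (red : L → L → Prop) {k : ℕ} (a : L) (f : Fin (k + 1) → L) :
    redCount red (Fin.cons a f : Fin (k + 2) → L) =
      (if red a (f 0) then 1 else 0) + redCount red f :=
  redCount_succ red _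

theorem IsCovByChain.tail [LT L] {k : ℕ} {f : Fin (k + 2) → L} (hf : IsCovByChain f) :
    IsCovByChain (Fin.tail f) :=
  fun i => hf i.succ

theorem IsCovByChain.cons [LT L] {k : ℕ} {a : L} {f : Fin (k + 1) → L} (ha : a ⋖ f 0)
    (hf : IsCovByChain f) : IsCovByChain (Fin.cons a f : Fin (k + 2) → L) :=
  Fin.cases ha hf

theorem IsCovByChain.strictMono [Preorder L] {k : ℕ} {f : Fin (k + 1) → L}
    (hf : IsCovByChain f) : StrictMono f :=
  Fin.strictMono_iff_lt_succ.2 fun i => (hf i).lt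

theorem IsCovByChain.eq_zero_of_head_eq_last [Preorder L] {k : ℕ} {f : Fin (k + 1) → L}
    (hf : IsCovByChain f) (h : f 0 = f (Fin.last k)) : k = 0 := by
  cases k with
  | zero => rfl
  | succ k => exact absurd h (hf.strictMono Fin.last_pos).ne

theorem exists_isCovByChain [PartialOrder L] [WellFoundedLT L] [WellFoundedGT L] {u w : L}
    (h : u ≤ w) : ∃ (n : ℕ) (e : Fin (n + 1) → L),
      IsCovByChain e ∧ e 0 = u ∧ e (Fin.last n) = w := by
  obtain ⟨a, ha0, n, han, hcov⟩ := exists_covBy_seq_of_wellFoundedLT_wellFoundedGT_of_le h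
  exact ⟨n, fun i => a i, fun i => hcov i i.2, ha0, han⟩

end CovByChain

open Classical in
theorem IsMatroidalColoring.red_add_red_eq_of_covBy {L : Type*} [Lattice L] {red : L → L → Prop}
    (hred : IsMatroidalColoring red) {a b b' v : L} (hab : a ⋖ b) (hbv : b ⋖ v) (hab' : a ⋖ b')
    (hb'v : b' ⋖ v) :
    (if red a b then 1 else 0) + (if red b v then 1 else 0) =
      (if red a b' then 1 else 0) + (if red b' v then 1 else 0) := by
  obtain ⟨c, hc⟩ : ∃ c, ∀ z, a ⋖ z → z ⋖ v →
      (if red a z then 1 else 0) + (if red z v then 1 else 0) = c := by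
    rcases hred a v ⟨b, hab, hbv⟩ with h | h | h | ⟨v₀, -, -, hav₀, hv₀v, h⟩
    · exact ⟨2, fun z haz hzv => by simp [h z haz hzv]⟩
    · exact ⟨0, fun z haz hzv => by simp [h z haz hzv]⟩
    · exact ⟨1, fun z haz hzv => by simp [h z haz hzv]⟩
    · refine ⟨1, fun z haz hzv => ?_⟩
      obtain rfl | hz := eq_or_ne z v₀
      · simp [hav₀, hv₀v]
      · simp [h z haz hzv hz]
  rw [hc b hab hbv, hc b' hab' hb'v]

theorem CovBy.covBy_sup_of_ne {L : Type*} [Lattice L] [IsWeakUpperModularLattice L] {a b b' : L}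
    (hb : a ⋖ b) (hb' : a ⋖ b') (hne : b ≠ b') : b ⋖ b ⊔ b' ∧ b' ⋖ b ⊔ b' := by
  obtain rfl : b ⊓ b' = a := hb.wcovBy.inf_eq hb'.wcovBy hne
  exact ⟨covBy_sup_of_inf_covBy_of_inf_covBy_left hb hb',
    covBy_sup_of_inf_covBy_of_inf_covBy_right hb hb'⟩

theorem FiniteHeight.wellFoundedGT {L : Type*} [Lattice L] (h : FiniteHeight L) :
    WellFoundedGT L := by
  obtain ⟨n, hn⟩ := h
  refine ⟨wellFounded_iff_isEmpty_descending_chain.2 ⟨fun ⟨a, ha⟩ => ?_⟩⟩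
  have hchain : (List.ofFn fun i : Fin (n + 2) => a i).IsChain (· < ·) :=
    List.isChain_ofFn.2 fun i _ => ha i
  simpa using hn _ hchain

theorem FiniteHeight.wellFoundedLT {L : Type*} [Lattice L] (h : FiniteHeight L) :
    WellFoundedLT L := by
  obtain ⟨n, hn⟩ := h
  refine ⟨wellFounded_iff_isEmpty_descending_chain.2 ⟨fun ⟨a, ha⟩ => ?_⟩⟩
  have hchain : (List.ofFn fun i : Fin (n + 2) => a i).reverse.IsChain (· < ·) :=
    List.isChain_reverse.2 (List.isChain_ofFn.2 fun i _ => ha i)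
  simpa using hn _ hchain

theorem IsMatroidalColoring.length_eq_and_redCount_eq {L : Type*} [Lattice L]
    [IsWeakUpperModularLattice L] [WellFoundedLT L] [WellFoundedGT L] {red : L → L → Prop}
    (hred : IsMatroidalColoring red) {k m : ℕ} {f : Fin (k + 1) → L} {g : Fin (m + 1) → L}
    (hf : IsCovByChain f) (hg : IsCovByChain g) (h0 : f 0 = g 0)
    (hlast : f (Fin.last k) = g (Fin.last m)) :
    k = m ∧ redCount red f = redCount red g := by
  induction k generalizing m g with
  | zero =>
    obtain rfl : m = 0 := hg.eq_zero_of_head_eq_last (h0.symm.trans hlast)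
    exact ⟨rfl, by simp [redCount]⟩
  | succ k ih =>
    obtain _ | m := m
    · exact absurd (hf.eq_zero_of_head_eq_last (h0.trans hlast.symm)) k.succ_ne_zero
    have hfb : f 0 ⋖ f 1 := hf 0
    have hgb : f 0 ⋖ g 1 := h0 ▸ hg 0
    by_cases hbb : f 1 = g 1
    · obtain ⟨rfl, htail⟩ := ih hf.tail hg.tail hbb hlast
      exact ⟨rfl, by rw [redCount_succ, redCount_succ, htail, h0, hbb]⟩
    obtain ⟨hfv, hgv⟩ := hfb.covBy_sup_of_ne hgb hbb
    have hvy : f 1 ⊔ g 1 ≤ f (Fin.last _) :=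
      sup_le (hf.strictMono.monotone (Fin.le_last _))
        (hlast ▸ hg.strictMono.monotone (Fin.le_last _))
    obtain ⟨n, e, he, he0, hey⟩ := exists_isCovByChain hvy
    obtain ⟨rfl, hf_e⟩ := ih (g := Fin.cons (f 1) e) hf.tail (he.cons (he0 ▸ hfv)) rfl hey.symm
    obtain ⟨rfl, he_g⟩ := ih (f := Fin.cons (g 1) e) (he.cons (he0 ▸ hgv)) hg.tail rfl
      (hey.trans hlast)
    refine ⟨rfl, ?_⟩
    have hdiamond := hred.red_add_red_eq_of_covBy hfb hfv hgb hgv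
    rw [redCount_succ red f, redCount_succ red g, hf_e, ← he_g, redCount_cons, redCount_cons, he0,
      ← h0]
    omega

theorem redCount_well_defined_general {L : Type*} [Lattice L] [IsModularLattice L]
    (hfin : FiniteHeight L) (red : L → L → Prop) (hred : IsMatroidalColoring red)
    (x y : L)
    (k m : ℕ) (f : Fin (k + 1) → L) (g : Fin (m + 1) → L)
    (hf0 : f 0 = x) (hfk : f (Fin.last k) = y)
    (hg0 : g 0 = x) (hgm : g (Fin.last m) = y)
    (hf : ∀ i : Fin k, f i.castSucc ⋖ f i.succ)
    (hg : ∀ i : Fin m, g i.castSucc ⋖ g i.succ) :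
    Nat.card {i : Fin k // red (f i.castSucc) (f i.succ)} =
      Nat.card {i : Fin m // red (g i.castSucc) (g i.succ)} := by
  have := hfin.wellFoundedLT
  have := hfin.wellFoundedGT
  exact (hred.length_eq_and_redCount_eq hf hg (hf0.trans hg0.symm) (hfk.trans hgm.symm)).2

/-- In a modular lattice of finite height with a matroidal bi-coloring of its coverings,
the number of red coverings in a maximal chain from `x` to `y` is independent of the choice
of maximal chain. -/
theorem redCount_well_defined {L : Type*} [Lattice L] [IsModularLattice L]
    (hfin : FiniteHeight L) (red : L → L → Prop) (hred : IsMatroidalColoring red)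
    (x y : L) (hxy : x ≤ y)
    (k m : ℕ) (f : Fin (k + 1) → L) (g : Fin (m + 1) → L)
    (hf0 : f 0 = x) (hfk : f (Fin.last k) = y)
    (hg0 : g 0 = x) (hgm : g (Fin.last m) = y)
    (hf : ∀ i : Fin k, f i.castSucc ⋖ f i.succ)
    (hg : ∀ i : Fin m, g i.castSucc ⋖ g i.succ) :
    Nat.card {i : Fin k // red (f i.castSucc) (f i.succ)} =
      Nat.card {i : Fin m // red (g i.castSucc) (g i.succ)} :=
  redCount_well_defined_general hfin red hred x y k m f g hf0 hfk hg0 hgm hf hg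
end

section
/- Let L be a modular lattice with a matroidal bi-coloring (as in the diamond axioms). If a covering [z, y] projects upward to a covering [x, w] (i.e. z = x ∧ y, w = x ∨ y, y covers z, w covers x) and [z, y] is green, then [x, w] is green; equivalently, if [x, w] is red then [z, y] is red. -/
/-! Induct upward on `z = x ⊓ y` inside `[z, x]`. If `z < x`, pick `t` covering `z` below `x`.
Then `z, t, y, t ⊔ y` is a diamond whose axioms force `[t, t ⊔ y]` to be green once `[z, y]` is,
and by modularity `[t, t ⊔ y]` still projects upward to `[x, x ⊔ y]`, now from a higher base.
Finite height makes this induction well founded and supplies the cover `t`. -/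

namespace FiniteHeight

variable {L : Type*} [Lattice L]

theorem not_strictMono (hfin : FiniteHeight L) (f : ℕ → L) : ¬ StrictMono f := by
  intro hf
  obtain ⟨n, hn⟩ := hfin
  have hchain : ((List.range (n + 2)).map f).IsChain (· < ·) :=
    (List.isChain_map f).2 <| (List.isChain_range_succ _ _).2 fun m _ => hf m.lt_succ_self
  simpa using hn _ hchain

theorem dual (hfin : FiniteHeight L) : FiniteHeight Lᵒᵈ := by
  obtain ⟨n, hn⟩ := hfin
  exact ⟨n, fun c hc => c.length_reverse ▸ hn c.reverse (List.isChain_reverse.2 hc)⟩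

theorem wellFoundedGT_s9 (hfin : FiniteHeight L) : WellFoundedGT L :=
  ⟨wellFounded_iff_isEmpty_descending_chain.2
    ⟨fun ⟨f, hf⟩ => hfin.not_strictMono f (strictMono_nat_of_lt_succ hf)⟩⟩

theorem wellFoundedLT_s9 (hfin : FiniteHeight L) : WellFoundedLT L :=
  hfin.dual.wellFoundedGT_s9

end FiniteHeight

namespace IsMatroidalColoring

variable {L : Type*} [Lattice L] {red : L → L → Prop}

theorem not_red_of_diamond (hred : IsMatroidalColoring red) {z a b w : L}
    (hza : z ⋖ a) (hzb : z ⋖ b) (haw : a ⋖ w) (hbw : b ⋖ w) (hab : a ≠ b)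
    (hg : ¬ red z b) : ¬ red a w := by
  rcases hred z w ⟨b, hzb, hbw⟩ with h | h | h | ⟨v₀, -, -, -, -, hv₀⟩
  · exact absurd (h b hzb hbw).1 hg
  · exact (h a hza haw).2
  · exact absurd (h b hzb hbw).1 hg
  · obtain rfl | hb := eq_or_ne b v₀
    · exact (hv₀ a hza haw hab).2
    · exact absurd (hv₀ b hzb hbw hb).1 hg

variable [IsModularLattice L]

theorem not_red_sup_of_inf_covBy (hred : IsMatroidalColoring red) {t y : L}
    (ht : t ⊓ y ⋖ t) (hy : t ⊓ y ⋖ y) (hg : ¬ red (t ⊓ y) y) : ¬ red t (t ⊔ y) := by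
  refine hred.not_red_of_diamond ht hy (covBy_sup_of_inf_covBy_right hy)
    (covBy_sup_of_inf_covBy_left ht) ?_ hg
  rintro rfl
  simp at ht

theorem not_red_sup_of_not_red_inf [IsStronglyAtomic L] [WellFoundedGT L]
    (hred : IsMatroidalColoring red) {x y : L} (hy : x ⊓ y ⋖ y) (hg : ¬ red (x ⊓ y) y) :
    ¬ red x (x ⊔ y) := by
  suffices ∀ z y, x ⊓ y = z → z ⋖ y → ¬ red z y → ¬ red x (x ⊔ y) from this _ y rfl hy hg
  intro z
  induction z using WellFoundedGT.induction with
  | _ z ih =>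
    rintro y rfl hy hg
    obtain hxy | hlt := (inf_le_left : x ⊓ y ≤ x).eq_or_lt
    · rwa [sup_eq_right.2 (inf_eq_left.1 hxy), ← hxy]
    obtain ⟨t, hzt, htx⟩ := exists_covBy_le_of_lt hlt
    have hty : t ⊓ y = x ⊓ y :=
      le_antisymm (inf_le_inf_right y htx) (le_inf hzt.le inf_le_right)
    have hx : x ⊓ (t ⊔ y) = t := by
      rw [inf_comm, sup_inf_assoc_of_le y htx, inf_comm y, sup_eq_left.2 hzt.le]
    have hsup : x ⊔ (t ⊔ y) = x ⊔ y := by rw [← sup_assoc, sup_eq_left.2 htx]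
    rw [← hty] at hzt hy hg
    have hgt : ¬ red t (t ⊔ y) := hred.not_red_sup_of_inf_covBy hzt hy hg
    exact hsup ▸ ih t (hty ▸ hzt.lt) (t ⊔ y) hx (covBy_sup_of_inf_covBy_right hy) hgt

end IsMatroidalColoring

theorem green_projects_upward_general {L : Type*} [Lattice L] [IsModularLattice L]
    (hfin : FiniteHeight L) (red : L → L → Prop) (hred : IsMatroidalColoring red)
    (x y z w : L) (hz : z = x ⊓ y) (hw : w = x ⊔ y)
    (hzy : z ⋖ y) (hgreen : ¬ red z y) :
    ¬ red x w := by
  have := hfin.wellFoundedLT_s9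
  have := hfin.wellFoundedGT_s9
  subst hz hw
  exact hred.not_red_sup_of_not_red_inf hzy hgreen

/-- In a modular lattice of finite height with a matroidal bi-coloring: if a covering
`[z, y]` projects upward to a covering `[x, w]` (i.e. `z = x ⊓ y`, `w = x ⊔ y`, `y` covers
`z` and `w` covers `x`) and `[z, y]` is green, then `[x, w]` is green; equivalently, if
`[x, w]` is red then `[z, y]` is red. -/
theorem green_projects_upward {L : Type*} [Lattice L] [IsModularLattice L]
    (hfin : FiniteHeight L) (red : L → L → Prop) (hred : IsMatroidalColoring red)
    (x y z w : L) (hz : z = x ⊓ y) (hw : w = x ⊔ y)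
    (hzy : z ⋖ y) (hxw : x ⋖ w) (hgreen : ¬ red z y) :
    ¬ red x w :=
  green_projects_upward_general hfin red hred x y z w hz hw hzy hgreen
end

section
/- Let ρ be a q-matroid rank function on the lattice L of subspaces of a finite-dimensional vector space (ρ bounded by dimension, monotone, submodular). Color a covering [x, y] red if ρ(y) = ρ(x) + 1 and green if ρ(y) = ρ(x). Then every interval of height 2 in L is one of the four matroidal diamond types: all red; all green; all lower covers red with all upper covers green; or exactly one green lower cover whose upper cover is the unique red upper cover. -/
section Aux

variable {F : Type*} [Field F] {V : Type*} [AddCommGroup V] [Module F V]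
  [FiniteDimensional F V]

omit [FiniteDimensional F V] in
lemma aux_step (ρ : Submodule F V → ℕ)
    (hbound : ∀ A : Submodule F V, ρ A ≤ Module.finrank F A)
    (hsub : ∀ A B : Submodule F V, ρ (A ⊔ B) + ρ (A ⊓ B) ≤ ρ A + ρ B)
    {u v : Submodule F V} (h : u ⋖ v) : ρ v ≤ ρ u + 1 := by
  obtain ⟨e, hev, heu⟩ := SetLike.exists_of_lt h.lt
  have he0 : e ≠ 0 := fun h0 => heu (h0 ▸ u.zero_mem)
  set s : Submodule F V := F ∙ e with hs
  have hsle : u ⊔ s ≤ v := sup_le h.le ((Submodule.span_singleton_le_iff_mem e v).2 hev)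
  have hlt : u < u ⊔ s := by
    refine lt_of_le_of_ne le_sup_left fun hEq => heu ?_
    have : e ∈ u ⊔ s := Submodule.mem_sup_right (Submodule.mem_span_singleton_self e)
    rwa [← hEq] at this
  have hveq : u ⊔ s = v := by
    by_contra hne
    exact h.2 hlt (lt_of_le_of_ne hsle hne)
  have hρs : ρ s ≤ 1 := by
    have := hbound s
    rwa [hs, finrank_span_singleton he0] at this
  have := hsub u s
  rw [hveq] at this
  omega

end Aux

lemma aux_diamond {L : Type*} [Lattice L] {u w v₁ v₂ : L}
    (h1 : u ⋖ v₁) (h1' : v₁ ⋖ w) (h2 : u ⋖ v₂) (h2' : v₂ ⋖ w) (hne : v₁ ≠ v₂) :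
    v₁ ⊓ v₂ = u ∧ v₁ ⊔ v₂ = w := by
  constructor
  · by_contra hinf
    have hlt : u < v₁ ⊓ v₂ := lt_of_le_of_ne (le_inf h1.le h2.le) (Ne.symm hinf)
    have : v₁ ⊓ v₂ = v₁ := by
      by_contra hne'
      exact h1.2 hlt (lt_of_le_of_ne inf_le_left hne')
    have hle : v₁ ≤ v₂ := this ▸ inf_le_right
    exact hne ((lt_or_eq_of_le hle).resolve_left (h2.2 h1.lt))
  · by_contra hsup
    have hlt : v₁ ⊔ v₂ < w := lt_of_le_of_ne (sup_le h1'.le h2'.le) hsup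
    have : v₁ ⊔ v₂ = v₁ := by
      by_contra hne'
      exact h1'.2 (lt_of_le_of_ne le_sup_left (Ne.symm hne')) hlt
    have hle : v₂ ≤ v₁ := this ▸ le_sup_right
    exact hne ((lt_or_eq_of_le hle).resolve_left (h2'.2 · h1'.lt)).symm


/-- Let `ρ` be a q-matroid rank function on the lattice of subspaces of a finite-dimensional
vector space over a finite field (bounded by dimension, monotone, submodular). Coloring a
covering `[x, y]` red when `ρ y = ρ x + 1` and green when `ρ y = ρ x`, every interval of
height 2 is one of the four matroidal diamond types. -/
theorem rank_function_coloring_matroidal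
    (F : Type*) [Field F] [Fintype F]
    (V : Type*) [AddCommGroup V] [Module F V] [FiniteDimensional F V]
    (ρ : Submodule F V → ℕ)
    (hbound : ∀ A : Submodule F V, ρ A ≤ Module.finrank F A)
    (hmono : ∀ A B : Submodule F V, A ≤ B → ρ A ≤ ρ B)
    (hsub : ∀ A B : Submodule F V, ρ (A ⊔ B) + ρ (A ⊓ B) ≤ ρ A + ρ B) :
    IsMatroidalColoring (fun x y : Submodule F V => ρ y = ρ x + 1) := by
  intro u w ⟨v, hv1, hv2⟩
  have step := fun {a b : Submodule F V} (h : a ⋖ b) => aux_step ρ hbound hsub h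
  have huv : ρ u ≤ ρ v := hmono _ _ hv1.le
  have hvw : ρ v ≤ ρ w := hmono _ _ hv2.le
  have h1 := step hv1
  have h2 := step hv2
  -- ρ w = ρ u, ρ u + 1, or ρ u + 2
  rcases Nat.lt_or_ge (ρ w) (ρ u + 1) with hw | hw
  · -- ρ w = ρ u : all green
    refine Or.inr (Or.inl fun v' hl hr => ?_)
    have := hmono _ _ hl.le
    have := hmono _ _ hr.le
    simp only []
    omega
  rcases Nat.lt_or_ge (ρ w) (ρ u + 2) with hw2 | hw2
  · -- ρ w = ρ u + 1
    by_cases hg : ∃ v₀, u ⋖ v₀ ∧ v₀ ⋖ w ∧ ρ v₀ = ρ u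
    · obtain ⟨v₀, hl0, hr0, hρ0⟩ := hg
      refine Or.inr (Or.inr (Or.inr ⟨v₀, hl0, hr0, ?_, ?_, ?_⟩))
      · simp only []; omega
      · simp only []; omega
      · intro v' hl hr hne
        have hρ' : ρ v' = ρ u + 1 := by
          by_contra hc
          have hle := hmono _ _ hl.le
          have hs' := step hl
          have hv'u : ρ v' = ρ u := by omega
          obtain ⟨hinf, hsupp⟩ := aux_diamond hl hr hl0 hr0 hne
          have := hsub v' v₀
          rw [hinf, hsupp] at this
          omega
        have : ρ w = ρ v' := by omega
        simp only []; omega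
    · push_neg at hg
      refine Or.inr (Or.inr (Or.inl fun v' hl hr => ?_))
      have hle := hmono _ _ hl.le
      have hs' := step hl
      have hv'ne : ρ v' ≠ ρ u := fun h => hg v' hl hr h
      simp only []
      omega
  · -- ρ w = ρ u + 2 : all red
    refine Or.inl fun v' hl hr => ?_
    have hle := hmono _ _ hl.le
    have hle2 := hmono _ _ hr.le
    have hs1 := step hl
    have hs2 := step hr
    simp only []
    omega
end

section
/- Let L be a modular lattice of finite height with a matroidal bi-coloring, and define ρ(x) to be the number of red coverings along any maximal chain from the bottom element to x. Then ρ is submodular: ρ(x ∨ y) + ρ(x ∧ y) ≤ ρ(x) + ρ(y) for all x, y. -/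
section Aux
open Classical

variable {L : Type*} [Lattice L] (red : L → L → Prop)

/-- modular cover transfer: if `a ⋖ b`, `a ≤ c`, `b ≰ c` then `c ⋖ c ⊔ b`. -/
lemma covSup [IsModularLattice L] {a b c : L} (hab : a ⋖ b) (hac : a ≤ c) (hbc : ¬ b ≤ c) :
    c ⋖ c ⊔ b := by
  constructor
  · exact lt_of_le_of_ne le_sup_left (fun h => hbc (h ▸ le_sup_right))
  · intro z hz1 hz2
    have hbz : ¬ b ≤ z := fun h => hz2.not_ge (sup_le hz1.le h)
    have hzb : z ⊓ b < b := lt_of_le_of_ne inf_le_right (fun e => hbz (e ▸ inf_le_left))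
    have hle : a ≤ z ⊓ b := le_inf (hac.trans hz1.le) hab.le
    have h1 : z ⊓ b = a := by
      rcases hle.lt_or_eq with h | h
      · exact absurd hzb (hab.2 h)
      · exact h.symm
    have h2 : (c ⊔ b) ⊓ z = c ⊔ b ⊓ z := sup_inf_assoc_of_le b hz1.le
    rw [inf_eq_right.2 hz2.le, inf_comm, h1, sup_eq_left.2 hac] at h2
    exact hz1.ne' h2

inductive CChain : L → L → ℕ → Prop
  | single (a : L) : CChain a a 0
  | consRed {a b c : L} {r : ℕ} (hab : a ⋖ b) (h : red a b) (hc : CChain b c r) :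
      CChain a c (r + 1)
  | consGreen {a b c : L} {r : ℕ} (hab : a ⋖ b) (h : ¬ red a b) (hc : CChain b c r) :
      CChain a c r

variable {red}

lemma CChain.le {a c : L} {r : ℕ} (h : CChain red a c r) : a ≤ c := by
  induction h with
  | single a => exact le_rfl
  | consRed hab _ _ ih => exact hab.le.trans ih
  | consGreen hab _ _ ih => exact hab.le.trans ih

lemma CChain.trans {a b c : L} {r s : ℕ} (h1 : CChain red a b r) (h2 : CChain red b c s) :
    CChain red a c (r + s) := by
  induction h1 with
  | single a => simpa using h2
  | consRed hab h _ ih => simpa [Nat.add_right_comm] using (CChain.consRed hab h (ih h2))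
  | consGreen hab h _ ih => exact CChain.consGreen hab h (ih h2)

/-- diamond lemma: a green cover transposes to a green cover. -/
lemma diamond_green [IsModularLattice L] (hred : IsMatroidalColoring red)
    {a b a' : L} (hab : a ⋖ b) (hg : ¬ red a b) (haa' : a ⋖ a') (hba' : ¬ b ≤ a') :
    a' ⋖ a' ⊔ b ∧ ¬ red a' (a' ⊔ b) := by
  have h1 : a' ⋖ a' ⊔ b := covSup hab haa'.le hba'
  have ha'b : ¬ a' ≤ b := by
    intro h
    rcases (lt_or_eq_of_le h) with h' | h'
    · exact hab.2 haa'.lt h'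
    · exact hba' (h' ▸ le_rfl)
  have h2 : b ⋖ a' ⊔ b := by
    have := covSup haa' hab.le ha'b
    rwa [sup_comm b a'] at this
  rcases hred a (a' ⊔ b) ⟨b, hab, h2⟩ with h | h | h | ⟨v₀, hv1, hv2, hv3, hv4, hv5⟩
  · exact absurd (h b hab h2).1 hg
  · exact ⟨h1, (h a' haa' h1).2⟩
  · exact absurd (h b hab h2).1 hg
  · have hb : b = v₀ := by
      by_contra hne2
      exact hg (hv5 b hab h2 hne2).1
    have ha' : a' ≠ v₀ := fun e => hba' (by rw [hb, ← e])
    exact ⟨h1, (hv5 a' haa' h1 ha').2⟩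

/-- a green cover at the bottom of a chain transposes up the chain to a green cover
(or gets absorbed). -/
lemma CChain.green_step [IsModularLattice L] (hred : IsMatroidalColoring red)
    {a c : L} {r : ℕ} (hch : CChain red a c r) :
    ∀ b, a ⋖ b → ¬ red a b → b ≤ c ∨ (c ⋖ c ⊔ b ∧ ¬ red c (c ⊔ b)) := by
  induction hch with
  | single a =>
    intro b hab hg
    right
    have : a ⊔ b = b := sup_eq_right.2 hab.le
    rw [this]
    exact ⟨hab, hg⟩
  | consRed haa' h hc ih =>
    intro b hab hg
    rename_i a a' c r
    by_cases hba' : b ≤ a'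
    · exact Or.inl (hba'.trans hc.le)
    · obtain ⟨hcov, hgr⟩ := diamond_green hred hab hg haa' hba'
      rcases ih (a' ⊔ b) hcov hgr with h' | ⟨h1, h2⟩
      · exact Or.inl (le_sup_right.trans h')
      · right
        rw [← sup_assoc, sup_eq_left.2 hc.le] at h1 h2
        exact ⟨h1, h2⟩
  | consGreen haa' h hc ih =>
    intro b hab hg
    rename_i a a' c r
    by_cases hba' : b ≤ a'
    · exact Or.inl (hba'.trans hc.le)
    · obtain ⟨hcov, hgr⟩ := diamond_green hred hab hg haa' hba'
      rcases ih (a' ⊔ b) hcov hgr with h' | ⟨h1, h2⟩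
      · exact Or.inl (le_sup_right.trans h')
      · right
        rw [← sup_assoc, sup_eq_left.2 hc.le] at h1 h2
        exact ⟨h1, h2⟩

lemma lift0_aux [IsModularLattice L] {x a b y : L} (hab : a ⋖ b)
    (ih : ∃ s, CChain red (x ⊔ b) (x ⊔ y) s) : ∃ s, CChain red (x ⊔ a) (x ⊔ y) s := by
  obtain ⟨s, hs⟩ := ih
  by_cases heq : x ⊔ a = x ⊔ b
  · exact ⟨s, heq ▸ hs⟩
  · have hble : ¬ b ≤ x ⊔ a := fun h =>
      heq (le_antisymm (sup_le_sup_left hab.le x) (sup_le le_sup_left h))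
    have hcov : x ⊔ a ⋖ x ⊔ b := by
      have := covSup hab (le_sup_right : a ≤ x ⊔ a) hble
      rwa [sup_assoc, sup_eq_right.2 hab.le] at this
    rcases Classical.em (red (x ⊔ a) (x ⊔ b)) with h | h
    · exact ⟨s + 1, CChain.consRed hcov h hs⟩
    · exact ⟨s, CChain.consGreen hcov h hs⟩

/-- joining with a fixed element lifts chains (existence, no count). -/
lemma CChain.lift0 [IsModularLattice L] {a y : L} {r : ℕ} (hch : CChain red a y r) (x : L) :
    ∃ s, CChain red (x ⊔ a) (x ⊔ y) s := by
  induction hch with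
  | single a => exact ⟨0, CChain.single _⟩
  | consRed hab h hc ih => exact lift0_aux hab ih
  | consGreen hab h hc ih => exact lift0_aux hab ih

/-- chains exist between comparable elements, given chains from the bottom. -/
lemma cchain_of_le [OrderBot L] [IsModularLattice L]
    (hbase : ∀ z : L, ∃ m, CChain red ⊥ z m) {a c : L} (h : a ≤ c) :
    ∃ r, CChain red a c r := by
  obtain ⟨m, hm⟩ := hbase c
  obtain ⟨s, hs⟩ := hm.lift0 a
  rw [sup_bot_eq, sup_eq_right.2 h] at hs
  exact ⟨s, hs⟩

/-- lifting a chain by joining with `x` does not increase the number of red steps. -/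
lemma CChain.lift_le [OrderBot L] [IsModularLattice L] (hred : IsMatroidalColoring red)
    (hbase : ∀ z : L, ∃ m, CChain red ⊥ z m) {a y : L} {r : ℕ}
    (hch : CChain red a y r) (x : L) :
    ∃ s ≤ r, CChain red (x ⊔ a) (x ⊔ y) s := by
  induction hch with
  | single a => exact ⟨0, le_refl 0, CChain.single _⟩
  | consRed hab h hc ih =>
    rename_i u v w n
    obtain ⟨s, hsle, hs⟩ := ih
    by_cases heq : x ⊔ u = x ⊔ v
    case pos => exact ⟨s, by omega, heq ▸ hs⟩
    case neg =>
      have hble : ¬ v ≤ x ⊔ u := fun h' =>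
        heq (le_antisymm (sup_le_sup_left hab.le x) (sup_le le_sup_left h'))
      have hcov : x ⊔ u ⋖ x ⊔ v := by
        have := covSup hab (le_sup_right : u ≤ x ⊔ u) hble
        rwa [sup_assoc, sup_eq_right.2 hab.le] at this
      rcases Classical.em (red (x ⊔ u) (x ⊔ v)) with h' | h'
      · exact ⟨s + 1, by omega, CChain.consRed hcov h' hs⟩
      · exact ⟨s, by omega, CChain.consGreen hcov h' hs⟩
  | consGreen hab h hc ih =>
    rename_i u v w n
    obtain ⟨s, hsle, hs⟩ := ih
    by_cases heq : x ⊔ u = x ⊔ v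
    case pos => exact ⟨s, hsle, heq ▸ hs⟩
    case neg =>
      obtain ⟨t, ht⟩ := cchain_of_le hbase (le_sup_right : u ≤ x ⊔ u)
      rcases ht.green_step hred v hab h with hble | ⟨hcov, hgr⟩
      · exact absurd (le_antisymm (sup_le_sup_left hab.le x) (sup_le le_sup_left hble)) heq
      · rw [sup_assoc, sup_eq_right.2 hab.le] at hcov hgr
        exact ⟨s, hsle, CChain.consGreen hcov hgr hs⟩

lemma card_fin_succ {n : ℕ} (P : Fin (n + 1) → Prop) :
    Nat.card {i // P i} = (if P 0 then 1 else 0) + Nat.card {i : Fin n // P i.succ} := by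
  classical
  simp only [Nat.card_eq_fintype_card, Fintype.card_subtype, Finset.card_filter,
    Fin.sum_univ_succ]

/-- convert a `CChain` to the data used in the hypotheses of the main theorem. -/
lemma CChain.toFin {a y : L} {r : ℕ} (hch : CChain red a y r) :
    ∃ (k : ℕ) (f : Fin (k + 1) → L), f 0 = a ∧ f (Fin.last k) = y ∧
      (∀ i : Fin k, f i.castSucc ⋖ f i.succ) ∧
      Nat.card {i : Fin k // red (f i.castSucc) (f i.succ)} = r := by
  induction hch with
  | single a =>
    refine ⟨0, fun _ => a, rfl, rfl, fun i => i.elim0, ?_⟩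
    have : IsEmpty {i : Fin 0 // red a a} := ⟨fun i => i.1.elim0⟩
    exact Nat.card_of_isEmpty
  | consRed hab h hc ih => exact toFin_aux hab ih (fun e => by rw [if_pos (e ▸ h), Nat.add_comm])
  | consGreen hab h hc ih =>
    exact toFin_aux hab ih (fun e => by rw [if_neg (fun h' => h (e ▸ h')), Nat.zero_add])
where
  toFin_aux {a b y : L} {r t : ℕ} (hab : a ⋖ b)
      (ih : ∃ (k : ℕ) (f : Fin (k + 1) → L), f 0 = b ∧ f (Fin.last k) = y ∧
        (∀ i : Fin k, f i.castSucc ⋖ f i.succ) ∧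
        Nat.card {i : Fin k // red (f i.castSucc) (f i.succ)} = r)
      (hcount : ∀ _ : b = b, (if red a b then 1 else 0) + r = t) :
      ∃ (k : ℕ) (f : Fin (k + 1) → L), f 0 = a ∧ f (Fin.last k) = y ∧
        (∀ i : Fin k, f i.castSucc ⋖ f i.succ) ∧
        Nat.card {i : Fin k // red (f i.castSucc) (f i.succ)} = t := by
    obtain ⟨k, f, h0, hl, hcov, hcard⟩ := ih
    refine ⟨k + 1, Fin.cons a f, by simp, ?_, ?_, ?_⟩
    · rw [← Fin.succ_last, Fin.cons_succ]
      exact hl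
    · intro i
      induction i using Fin.cases with
      | zero => simpa [h0] using hab
      | succ j => simpa [← Fin.succ_castSucc] using hcov j
    · rw [card_fin_succ]
      simp only [Fin.castSucc_zero, Fin.cons_zero, Fin.cons_succ, ← Fin.succ_castSucc, h0]
      rw [hcard]
      exact hcount rfl

/-- convert the Fin-chains of `hex` to `CChain`s. -/
lemma fin_to_cchain (red : L → L → Prop) :
    ∀ (k : ℕ) (f : Fin (k + 1) → L), (∀ i : Fin k, f i.castSucc ⋖ f i.succ) →
      ∃ r, CChain red (f 0) (f (Fin.last k)) r := by
  intro k
  induction k with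
  | zero => exact fun f _ => ⟨0, CChain.single _⟩
  | succ k ih =>
    intro f hcov
    obtain ⟨r, hr⟩ := ih (fun i => f i.succ) (fun i => by
      show f i.castSucc.succ ⋖ f i.succ.succ
      rw [Fin.succ_castSucc]
      exact hcov i.succ)
    have hlast : f (Fin.last k).succ = f (Fin.last (k + 1)) := by rw [Fin.succ_last]
    rw [hlast] at hr
    have h01 : f (Fin.castSucc (0 : Fin (k + 1))) ⋖ f (Fin.succ (0 : Fin (k + 1))) := hcov 0
    rw [Fin.castSucc_zero] at h01
    rcases Classical.em (red (f 0) (f (Fin.succ 0))) with h | h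
    · exact ⟨r + 1, CChain.consRed h01 h hr⟩
    · exact ⟨r, CChain.consGreen h01 h hr⟩

end Aux

/-- In a modular lattice of finite height with a matroidal bi-coloring, the rank `ρ x`,
defined as the number of red coverings along any maximal chain from the bottom element to
`x`, is submodular: `ρ (x ⊔ y) + ρ (x ⊓ y) ≤ ρ x + ρ y`. -/
theorem matroidal_rank_submodular {L : Type*} [Lattice L] [OrderBot L]
    [IsModularLattice L] (hfin : FiniteHeight L)
    (red : L → L → Prop) (hred : IsMatroidalColoring red) (ρ : L → ℕ)
    (hρ : ∀ (x : L) (k : ℕ) (f : Fin (k + 1) → L), f 0 = ⊥ → f (Fin.last k) = x →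
      (∀ i : Fin k, f i.castSucc ⋖ f i.succ) →
      ρ x = Nat.card {i : Fin k // red (f i.castSucc) (f i.succ)})
    (hex : ∀ x : L, ∃ (k : ℕ) (f : Fin (k + 1) → L), f 0 = ⊥ ∧ f (Fin.last k) = x ∧
      ∀ i : Fin k, f i.castSucc ⋖ f i.succ) :
    ∀ x y : L, ρ (x ⊔ y) + ρ (x ⊓ y) ≤ ρ x + ρ y := by
  intro x y
  have hbase : ∀ z : L, ∃ m, CChain red ⊥ z m := by
    intro z
    obtain ⟨k, f, h0, hl, hc⟩ := hex z
    obtain ⟨r, hr⟩ := fin_to_cchain red k f hc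
    rw [h0, hl] at hr
    exact ⟨r, hr⟩
  have hrho : ∀ (z : L) (r : ℕ), CChain red ⊥ z r → ρ z = r := by
    intro z r h
    obtain ⟨k, f, h0, hl, hc, hcard⟩ := h.toFin
    rw [hρ z k f h0 hl hc, hcard]
  obtain ⟨p, hp⟩ := hbase (x ⊓ y)
  obtain ⟨q, hq⟩ := cchain_of_le hbase (inf_le_right : x ⊓ y ≤ y)
  have hy : ρ y = p + q := hrho y (p + q) (hp.trans hq)
  have hm : ρ (x ⊓ y) = p := hrho _ p hp
  obtain ⟨s, hsq, hs⟩ := hq.lift_le hred hbase x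
  rw [sup_inf_self] at hs
  obtain ⟨t, ht⟩ := hbase x
  have hx : ρ x = t := hrho x t ht
  have hj : ρ (x ⊔ y) = t + s := hrho _ _ (ht.trans hs)
  omega
end

section
/- Let L be a complemented modular lattice of finite height h, let x ∈ L with height r where 0 < r < h, and let w be a coatom with x < w. Then y is a complement of x in L if and only if z := y ∧ w is a complement of x in the interval [⊥, w] and y is a complement of w in the interval [z, ⊤]. -/
/-- In a complemented modular lattice `L` of finite height `h`, let `x` have height `r`
with `0 < r < h` and let `w` be a coatom with `x < w`. Then `y` is a complement of `x` in
`L` if and only if `z := y ⊓ w` is a complement of `x` in the interval `[⊥, w]` (that is,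
`x ⊓ z = ⊥` and `x ⊔ z = w`) and `y` is a complement of `w` in the interval `[z, ⊤]`
(that is, `y ⊓ w = z` and `y ⊔ w = ⊤`). -/
theorem complement_via_coatom {L : Type*} [Lattice L] [BoundedOrder L]
    [IsModularLattice L] [ComplementedLattice L] (h r : ℕ)
    (hheight : Order.height (⊤ : L) = h)
    (x : L) (hx : Order.height x = r) (hr0 : 0 < r) (hrh : r < h)
    (w : L) (hw : IsCoatom w) (hxw : x < w) (y : L) :
    (x ⊓ y = ⊥ ∧ x ⊔ y = ⊤) ↔
      (x ⊓ (y ⊓ w) = ⊥ ∧ x ⊔ (y ⊓ w) = w ∧ y ⊔ w = ⊤) := by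
  have hxle : x ≤ w := le_of_lt hxw
  constructor
  · rintro ⟨h1, h2⟩
    refine ⟨?_, ?_, ?_⟩
    · exact le_antisymm (le_trans (inf_le_inf_left x inf_le_left) h1.le) bot_le
    · rw [← sup_inf_assoc_of_le y hxle, h2, top_inf_eq]
    · rw [sup_comm]; exact le_antisymm le_top (h2 ▸ sup_le_sup_right hxle y)
  · rintro ⟨h1, h2, h3⟩
    constructor
    · have : x ⊓ y = x ⊓ y ⊓ w := by
        rw [inf_eq_left.mpr (le_trans inf_le_left hxle)]
      rw [this, inf_assoc, h1]
    · have hW : w ≤ x ⊔ y := h2 ▸ sup_le_sup_left inf_le_left x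
      have hY : y ≤ x ⊔ y := le_sup_right
      exact le_antisymm le_top (h3 ▸ sup_le hY hW)
end
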